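/- arXiv:2201.06327 — 3 statements merged into one kernel-verified Lean document; each statement's English description precedes it below -/
import Mathlib

section
/- Let γ be a standard Gaussian vector in R^p and B a symmetric p×p matrix. Then Var(⟨Bγ,γ⟩²) = 8 (tr B)² tr(B²) + 32 (tr B) tr(B³) + 48 tr(B⁴) + 8 (tr B²)². -/
/-!
Gaussian integration by parts, `E[γᵢ Q(γ)] = E[∂ᵢ Q(γ)]` for polynomials `Q`, is the only
analytic input. Applied to the quadratic forms `q_C(γ) = ⟨Cγ, γ⟩` it gives, for symmetric
`B`, `E[q_C q_B^(k+1)] = tr C · E[q_B^(k+1)] + 2(k+1) E[q_{CᵀB} q_B^k]`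
because `∂ᵢ q_B = 2 (Bγ)ᵢ`. With `C = B^r` this recursion in `k` expresses `E[q_B^2]` and
`E[q_B^4]` through the traces `tr B^r`, and the variance is `E[q_B^4] - E[q_B^2]^2`.
-/

open MeasureTheory ProbabilityTheory Matrix

noncomputable def stdGaussian (p : ℕ) : Measure (Fin p → ℝ) :=
  Measure.pi fun _ => gaussianReal 0 1

open Real

lemma integrable_pow_mul_exp_neg_sq_div_two (n : ℕ) :
    Integrable fun x : ℝ => x ^ n * rexp (-x ^ 2 / 2) := by
  have h := integrable_rpow_mul_exp_neg_mul_sq (b := 1 / 2) (by norm_num)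
    (s := n) (by linarith [(n.cast_nonneg : (0 : ℝ) ≤ n)])
  simp only [rpow_natCast] at h
  convert h using 4 with x
  ring

lemma integral_gaussianReal_eq_integral_mul_exp (f : ℝ → ℝ) :
    ∫ x, f x ∂gaussianReal 0 1 = (√(2 * π))⁻¹ * ∫ x, f x * rexp (-x ^ 2 / 2) := by
  rw [integral_gaussianReal_eq_integral_smul one_ne_zero, ← integral_const_mul]
  congr 1 with x
  simp [gaussianPDFReal]
  ring

lemma integrable_pow_gaussianReal (n : ℕ) :
    Integrable (fun x : ℝ => x ^ n) (gaussianReal 0 1) :=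
  (memLp_id_gaussianReal n).integrable_norm_pow'.mono' (by fun_prop)
    (ae_of_all _ fun x => by simp [norm_pow])

lemma integral_pow_add_two_mul_exp (n : ℕ) :
    ∫ x : ℝ, x ^ (n + 2) * rexp (-x ^ 2 / 2)
      = (n + 1) * ∫ x : ℝ, x ^ n * rexp (-x ^ 2 / 2) := by
  have hu (x : ℝ) : HasDerivAt (fun y : ℝ => y ^ (n + 1)) ((n + 1) * x ^ n) x := by
    simpa using hasDerivAt_pow (n + 1) x
  have hv (x : ℝ) : HasDerivAt (fun y : ℝ => rexp (-y ^ 2 / 2)) (rexp (-x ^ 2 / 2) * -x) x := by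
    convert ((hasDerivAt_pow 2 x).fun_neg.div_const 2).exp using 1
    push_cast; ring
  have ibp := integral_mul_deriv_eq_deriv_mul_of_integrable (fun x _ => hu x) (fun x _ => hv x)
    ((integrable_pow_mul_exp_neg_sq_div_two (n + 2)).neg.congr (ae_of_all _ fun x => by
      simp only [Pi.mul_apply, Pi.neg_apply]; ring))
    (((integrable_pow_mul_exp_neg_sq_div_two n).const_mul (n + 1)).congr (ae_of_all _ fun x => by
      simp only [Pi.mul_apply]; ring))
    (integrable_pow_mul_exp_neg_sq_div_two (n + 1))
  calc ∫ x : ℝ, x ^ (n + 2) * rexp (-x ^ 2 / 2)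
      = -∫ x : ℝ, x ^ (n + 1) * (rexp (-x ^ 2 / 2) * -x) := by
        rw [← integral_neg]; congr 1 with x; ring
    _ = (n + 1) * ∫ x : ℝ, x ^ n * rexp (-x ^ 2 / 2) := by
        rw [ibp, neg_neg, ← integral_const_mul]; congr 1 with x; ring

lemma integral_pow_succ_gaussianReal (n : ℕ) :
    ∫ x, x ^ (n + 1) ∂gaussianReal 0 1 = n * ∫ x, x ^ (n - 1) ∂gaussianReal 0 1 := by
  cases n with
  | zero => simp
  | succ n =>
    simp only [integral_gaussianReal_eq_integral_mul_exp, integral_pow_add_two_mul_exp,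
      Nat.add_sub_cancel, Nat.cast_succ]
    ring

open MvPolynomial

section PolynomialIntegral

variable {p : ℕ}

instance : IsProbabilityMeasure (stdGaussian p) := by
  unfold _root_.stdGaussian; infer_instance

lemma eval_monomial_eq_prod (α : Fin p →₀ ℕ) (c : ℝ) (x : Fin p → ℝ) :
    eval x (monomial α c) = c * ∏ i, x i ^ α i := by
  rw [eval_monomial, Finsupp.prod_fintype _ _ fun i => pow_zero _]

lemma integrable_eval_stdGaussian (Q : MvPolynomial (Fin p) ℝ) :
    Integrable (fun x => eval x Q) (stdGaussian p) := by
  induction Q using MvPolynomial.induction_on' with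
  | monomial α c =>
    simp_rw [eval_monomial_eq_prod]
    exact (Integrable.fintype_prod fun i => integrable_pow_gaussianReal (α i)).const_mul c
  | add P Q hP hQ => simp only [map_add]; exact hP.add hQ

noncomputable def stdGaussianIntegral : MvPolynomial (Fin p) ℝ →ₗ[ℝ] ℝ where
  toFun Q := ∫ x, eval x Q ∂stdGaussian p
  map_add' P Q := by
    simp_rw [map_add]
    exact integral_add (integrable_eval_stdGaussian P) (integrable_eval_stdGaussian Q)
  map_smul' c Q := by
    simp_rw [smul_eval, integral_const_mul, RingHom.id_apply, smul_eq_mul]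

lemma stdGaussianIntegral_apply (Q : MvPolynomial (Fin p) ℝ) :
    stdGaussianIntegral Q = ∫ x, eval x Q ∂stdGaussian p := rfl

lemma memLp_two_eval_stdGaussian (Q : MvPolynomial (Fin p) ℝ) :
    MemLp (fun x => eval x Q) 2 (stdGaussian p) :=
  (memLp_two_iff_integrable_sq (continuous_eval Q).aestronglyMeasurable).2 <|
    (integrable_eval_stdGaussian (Q ^ 2)).congr (ae_of_all _ fun x => map_pow (eval x) Q 2)

lemma variance_eval_stdGaussian (Q : MvPolynomial (Fin p) ℝ) :
    variance (fun x => eval x Q) (stdGaussian p)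
      = stdGaussianIntegral (Q ^ 2) - stdGaussianIntegral Q ^ 2 := by
  rw [variance_eq_sub (memLp_two_eval_stdGaussian Q)]
  simp only [Pi.pow_apply, ← map_pow, stdGaussianIntegral_apply]

lemma stdGaussianIntegral_one : stdGaussianIntegral (1 : MvPolynomial (Fin p) ℝ) = 1 := by
  simp [stdGaussianIntegral_apply]

lemma stdGaussianIntegral_monomial (α : Fin p →₀ ℕ) (c : ℝ) :
    stdGaussianIntegral (monomial α c) = c * ∏ i, ∫ t, t ^ α i ∂gaussianReal 0 1 := by
  simp_rw [stdGaussianIntegral_apply, eval_monomial_eq_prod, integral_const_mul,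
    _root_.stdGaussian, integral_fintype_prod_eq_prod (fun i t => t ^ α i)]

theorem stdGaussianIntegral_X_mul (i : Fin p) (Q : MvPolynomial (Fin p) ℝ) :
    stdGaussianIntegral (X i * Q) = stdGaussianIntegral (pderiv i Q) := by
  induction Q using MvPolynomial.induction_on' with
  | add P Q hP hQ => simp only [mul_add, map_add, hP, hQ]
  | monomial α c =>
    set m : ℕ → ℝ := fun n => ∫ t, t ^ n ∂gaussianReal 0 1
    have hprod (β : Fin p →₀ ℕ) (hβ : ∀ j ≠ i, β j = α j) :
        ∏ j, m (β j) = m (β i) * ∏ j ∈ Finset.univ.erase i, m (α j) := by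
      rw [← Finset.mul_prod_erase _ _ (Finset.mem_univ i)]
      congr 1
      exact Finset.prod_congr rfl fun j hj => by rw [hβ j (Finset.ne_of_mem_erase hj)]
    rw [X, monomial_mul, pderiv_monomial, stdGaussianIntegral_monomial,
      stdGaussianIntegral_monomial, hprod _ (by simp +contextual),
      hprod _ (by simp +contextual)]
    simp only [m, Finsupp.add_apply, Finsupp.tsub_apply, Finsupp.single_eq_same,
      add_comm 1, integral_pow_succ_gaussianReal]
    ring

end PolynomialIntegral

section QuadraticPolynomial

variable {p : ℕ}

noncomputable def quadPoly (M : Matrix (Fin p) (Fin p) ℝ) : MvPolynomial (Fin p) ℝ :=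
  ∑ i, ∑ j, M i j • (X i * X j)

lemma eval_quadPoly (M : Matrix (Fin p) (Fin p) ℝ) (x : Fin p → ℝ) :
    eval x (quadPoly M) = M *ᵥ x ⬝ᵥ x := by
  simp only [quadPoly, map_sum, smul_eval, eval_mul, eval_X, mulVec, dotProduct, Finset.sum_mul]
  exact Finset.sum_congr rfl fun i _ => Finset.sum_congr rfl fun j _ => by ring

lemma pderiv_quadPoly {B : Matrix (Fin p) (Fin p) ℝ} (hB : B.IsSymm) (i : Fin p) :
    pderiv i (quadPoly B) = (2 : ℝ) • ∑ l, B i l • X l := by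
  simp only [quadPoly, map_sum, Derivation.map_smul, pderiv_mul, pderiv_X, Pi.single_apply,
    ite_mul, mul_ite, one_mul, mul_one, zero_mul, mul_zero, smul_add, Finset.sum_add_distrib,
    smul_ite, smul_zero, Finset.sum_ite_eq', Finset.mem_univ, if_true]
  rw [Finset.sum_comm]
  simp only [Finset.sum_ite_eq', Finset.mem_univ, if_true, hB.apply, two_smul]

lemma stdGaussianIntegral_quadPoly_mul_eq_sum (M : Matrix (Fin p) (Fin p) ℝ)
    (P : MvPolynomial (Fin p) ℝ) :
    stdGaussianIntegral (quadPoly M * P)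
      = ∑ i, ∑ j, M i j * stdGaussianIntegral (X i * (X j * P)) := by
  simp only [quadPoly, Finset.sum_mul, smul_mul_assoc, mul_assoc, map_sum, map_smul, smul_eq_mul]

lemma stdGaussianIntegral_quadPoly_mul (C : Matrix (Fin p) (Fin p) ℝ)
    (P : MvPolynomial (Fin p) ℝ) :
    stdGaussianIntegral (quadPoly C * P)
      = C.trace * stdGaussianIntegral P
        + ∑ i, ∑ j, C i j * stdGaussianIntegral (X j * pderiv i P) := by
  have hX_mul_X_mul (i j : Fin p) : stdGaussianIntegral (X i * (X j * P))
      = (if i = j then stdGaussianIntegral P else 0) + stdGaussianIntegral (X j * pderiv i P) := by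
    rw [stdGaussianIntegral_X_mul, pderiv_mul, pderiv_X, map_add]
    split_ifs with h <;> simp [h, eq_comm]
  simp only [stdGaussianIntegral_quadPoly_mul_eq_sum, hX_mul_X_mul, mul_add,
    Finset.sum_add_distrib, mul_ite, mul_zero, Finset.sum_ite_eq, Finset.mem_univ, if_true,
    Matrix.trace, Matrix.diag, Finset.sum_mul]

lemma stdGaussianIntegral_quadPoly (M : Matrix (Fin p) (Fin p) ℝ) :
    stdGaussianIntegral (quadPoly M) = M.trace := by
  simpa [stdGaussianIntegral_one] using stdGaussianIntegral_quadPoly_mul M 1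

theorem stdGaussianIntegral_quadPoly_mul_pow_succ {B : Matrix (Fin p) (Fin p) ℝ} (hB : B.IsSymm)
    (C : Matrix (Fin p) (Fin p) ℝ) (k : ℕ) :
    stdGaussianIntegral (quadPoly C * quadPoly B ^ (k + 1))
      = C.trace * stdGaussianIntegral (quadPoly B ^ (k + 1))
        + 2 * (k + 1) * stdGaussianIntegral (quadPoly (Cᵀ * B) * quadPoly B ^ k) := by
  have hpderiv (i j : Fin p) : X j * pderiv i (quadPoly B ^ (k + 1))
      = ∑ l, (2 * (k + 1) * B i l) • (X j * (X l * quadPoly B ^ k)) := by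
    rw [pderiv_pow, pderiv_quadPoly hB, Nat.add_sub_cancel]
    simp only [smul_eq_C_mul, Finset.mul_sum]
    refine Finset.sum_congr rfl fun l _ => ?_
    simp only [map_mul, map_add, map_natCast, map_ofNat, map_one]
    push_cast
    ring
  rw [stdGaussianIntegral_quadPoly_mul, stdGaussianIntegral_quadPoly_mul_eq_sum (Cᵀ * B)]
  congr 1
  simp only [hpderiv, map_sum, map_smul, smul_eq_mul, Matrix.mul_apply, transpose_apply,
    Finset.sum_mul, Finset.mul_sum]
  rw [Finset.sum_comm]
  refine Finset.sum_congr rfl fun j _ => ?_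
  rw [Finset.sum_comm]
  exact Finset.sum_congr rfl fun l _ => Finset.sum_congr rfl fun i _ => by ring

end QuadraticPolynomial

section SymmetricMatrix

variable {p : ℕ} {B : Matrix (Fin p) (Fin p) ℝ}

noncomputable def quadPolyMixedMoment (B : Matrix (Fin p) (Fin p) ℝ) (r k : ℕ) : ℝ :=
  stdGaussianIntegral (quadPoly (B ^ r) * quadPoly B ^ k)

lemma quadPolyMixedMoment_zero (r : ℕ) : quadPolyMixedMoment B r 0 = (B ^ r).trace := by
  rw [quadPolyMixedMoment, pow_zero, mul_one, stdGaussianIntegral_quadPoly]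

lemma quadPolyMixedMoment_succ (hB : B.IsSymm) (r k : ℕ) :
    quadPolyMixedMoment B r (k + 1)
      = (B ^ r).trace * quadPolyMixedMoment B 1 k
        + 2 * (k + 1) * quadPolyMixedMoment B (r + 1) k := by
  rw [quadPolyMixedMoment, stdGaussianIntegral_quadPoly_mul_pow_succ hB, transpose_pow, hB.eq,
    ← pow_succ, quadPolyMixedMoment, pow_one, pow_succ', quadPolyMixedMoment]

lemma stdGaussianIntegral_quadPoly_pow_succ (k : ℕ) :
    stdGaussianIntegral (quadPoly B ^ (k + 1)) = quadPolyMixedMoment B 1 k := by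
  rw [quadPolyMixedMoment, pow_one, pow_succ']

lemma stdGaussianIntegral_quadPoly_sq (hB : B.IsSymm) :
    stdGaussianIntegral (quadPoly B ^ 2) = B.trace ^ 2 + 2 * (B ^ 2).trace := by
  simp only [stdGaussianIntegral_quadPoly_pow_succ, quadPolyMixedMoment_succ hB,
    quadPolyMixedMoment_zero, pow_one]
  ring

lemma stdGaussianIntegral_quadPoly_pow_four (hB : B.IsSymm) :
    stdGaussianIntegral (quadPoly B ^ 4)
      = B.trace ^ 4 + 12 * B.trace ^ 2 * (B ^ 2).trace + 32 * B.trace * (B ^ 3).trace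
        + 48 * (B ^ 4).trace + 12 * (B ^ 2).trace ^ 2 := by
  simp only [stdGaussianIntegral_quadPoly_pow_succ, quadPolyMixedMoment_succ hB,
    quadPolyMixedMoment_zero, pow_one]
  ring

end SymmetricMatrix

theorem stmt_6 {p : ℕ} (B : Matrix (Fin p) (Fin p) ℝ) (hB : B.IsSymm) :
    variance (fun γ => (B.mulVec γ ⬝ᵥ γ) ^ 2) (stdGaussian p)
      = 8 * B.trace ^ 2 * (B ^ 2).trace + 32 * B.trace * (B ^ 3).trace
        + 48 * (B ^ 4).trace + 8 * ((B ^ 2).trace) ^ 2 := by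
  simp only [← eval_quadPoly, ← map_pow]
  rw [variance_eval_stdGaussian, ← pow_mul, stdGaussianIntegral_quadPoly_pow_four hB,
    stdGaussianIntegral_quadPoly_sq hB]
  ring
end

section
/- Let ξ ~ N(0, V²) in R^p, B symmetric, W = V B V trace class with p̄ = tr W, v² = tr W², λ = ‖W‖_op. Then for every z > v: P(|⟨Bξ,ξ⟩ − p̄| ≥ z) ≤ 2 exp{−z² / (v + √(v² + 2λz))²} ≤ 2 exp{−z²/(4v² + 4λz)}. -/
open MeasureTheory ProbabilityTheory Matrix

/-- The Euclidean norm of a vector in `Fin p → ℝ`. -/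
noncomputable def enorm2 {p : ℕ} (v : Fin p → ℝ) : ℝ :=
  Real.sqrt (v ⬝ᵥ v)

/-
Write `ξ = Vγ` with `γ` standard Gaussian, so that `⟨Bξ, ξ⟩ = ⟨Wγ, γ⟩`. Expanding `γ` in an
orthonormal eigenbasis of `W` (the standard Gaussian is rotation invariant), `⟨Bξ, ξ⟩ - p̄` has the
law of `X = ∑ dᵢ (xᵢ² - 1)`, with `x` standard Gaussian and `dᵢ` the eigenvalues of `W`, so
`∑ dᵢ² = v²` and `|dᵢ| ≤ λ`. Since `E e^{c(y² - 1)} = e^{-c} / √(1 - 2c)` for `y ~ N(0, 1)`, an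
elementary logarithm bound gives the Laurent–Massart estimate `E e^{tX} ≤ e^{t²v² / (1 - 2|t|λ)}`.
Chernoff's bound at the optimal `t` turns it into `P(|X| ≥ 2v√x + 2λx) ≤ 2e^{-x}`, and the first
inequality is this one at the solution `√x = z / (v + √(v² + 2λz))` of `2v√x + 2λx = z`. The
second one is `(v + √(v² + 2λz))² ≤ 2v² + 2(v² + 2λz)`.
-/

open Real

lemma neg_sub_log_one_sub_two_mul_le {a L : ℝ} (hL : L < 1 / 2) (ha : |a| ≤ L) :
    -a - log (1 - 2 * a) / 2 ≤ a ^ 2 / (1 - 2 * L) := by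
  obtain ⟨haL, haL'⟩ := abs_le.mp ha
  have hL' : 0 < 1 - 2 * L := by linarith
  have hy : 0 < 1 - 2 * a := by linarith
  rcases le_or_gt 0 a with ha0 | ha0
  · have key := sinh_le_self_iff.mpr (log_nonpos hy.le (by linarith))
    rw [sinh_log hy] at key
    calc -a - log (1 - 2 * a) / 2 ≤ -a - (1 - 2 * a - (1 - 2 * a)⁻¹) / 4 := by linarith
      _ = a ^ 2 / (1 - 2 * a) := by
          generalize hy' : 1 - 2 * a = y at hy ⊢
          obtain rfl : a = (1 - y) / 2 := by linarith
          field_simp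
          ring
      _ ≤ a ^ 2 / (1 - 2 * L) := by gcongr
  · have key := le_log_one_add_of_nonneg (x := -2 * a) (by linarith)
    rw [show 1 + -2 * a = 1 - 2 * a by ring, div_le_iff₀ (by linarith)] at key
    calc -a - log (1 - 2 * a) / 2 ≤ a ^ 2 := by nlinarith
      _ ≤ a ^ 2 / (1 - 2 * L) := le_div_self (sq_nonneg a) hL' (by linarith)

lemma two_mul_sqrt_add_two_mul_eq {v L z : ℝ} (hv : 0 < v) (hL : 0 ≤ L) (hz : 0 ≤ z) :
    2 * v * √(z ^ 2 / (v + √(v ^ 2 + 2 * L * z)) ^ 2)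
      + 2 * L * (z ^ 2 / (v + √(v ^ 2 + 2 * L * z)) ^ 2) = z := by
  have hr := sq_sqrt (show 0 ≤ v ^ 2 + 2 * L * z by positivity)
  set r := √(v ^ 2 + 2 * L * z)
  have hpos : 0 < v + r := by positivity
  rw [sqrt_div' _ (sq_nonneg _), sqrt_sq hz, sqrt_sq hpos.le]
  field_simp
  linear_combination (-z) * hr

lemma neg_sq_div_sq_add_sqrt_le {v L z : ℝ} (hv : 0 ≤ v) (hL : 0 ≤ L) (hz : 0 ≤ z) :
    -(z ^ 2) / (v + √(v ^ 2 + 2 * L * z)) ^ 2 ≤ -(z ^ 2) / (4 * v ^ 2 + 4 * L * z) := by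
  have hr := sq_sqrt (show 0 ≤ v ^ 2 + 2 * L * z by positivity)
  set r := √(v ^ 2 + 2 * L * z)
  have hr0 : 0 ≤ r := sqrt_nonneg _
  have hlower : (4 * v ^ 2 + 4 * L * z) / 2 ≤ (v + r) ^ 2 := by nlinarith [mul_nonneg hv hr0]
  have hupper : (v + r) ^ 2 ≤ 4 * v ^ 2 + 4 * L * z := by nlinarith [sq_nonneg (v - r)]
  rw [neg_div, neg_div, neg_le_neg_iff]
  rcases (show 0 ≤ 4 * v ^ 2 + 4 * L * z by positivity).eq_or_lt with h0 | hpos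
  · rw [← h0, div_zero]; positivity
  · exact div_le_div_of_nonneg_left (sq_nonneg z) (by linarith) hupper

section SubGamma

variable {Ω : Type*} [MeasurableSpace Ω] {μ : Measure Ω} [IsFiniteMeasure μ] {X : Ω → ℝ}
  {v L x : ℝ}

lemma measureReal_ge_le_exp_neg_of_mgf_le (hv : 0 < v) (hL : 0 ≤ L) (hx : 0 ≤ x)
    (hX : ∀ t, 0 ≤ t → 2 * t * L < 1 →
      Integrable (fun ω => exp (t * X ω)) μ ∧ mgf X μ t ≤ exp (t ^ 2 * v ^ 2 / (1 - 2 * t * L))) :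
    μ.real {ω | 2 * v * √x + 2 * L * x ≤ X ω} ≤ exp (-x) := by
  obtain ⟨s, hs, rfl⟩ : ∃ s, 0 ≤ s ∧ x = s ^ 2 := ⟨√x, sqrt_nonneg x, (sq_sqrt hx).symm⟩
  rw [sqrt_sq hs]
  have hden : 0 < v + 2 * L * s := by positivity
  -- the optimal Chernoff parameter: there `-t (2vs + 2Ls²) + t²v² / (1 - 2tL) = -s²`
  set t := s / (v + 2 * L * s) with ht_def
  have ht : 0 ≤ t := by positivity
  have htL : 1 - 2 * t * L = v / (v + 2 * L * s) := by rw [ht_def]; field_simp; ring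
  obtain ⟨hint, hmgf⟩ := hX t ht (by linarith [div_pos hv hden])
  calc μ.real {ω | 2 * v * s + 2 * L * s ^ 2 ≤ X ω}
      ≤ exp (-t * (2 * v * s + 2 * L * s ^ 2)) * mgf X μ t := measure_ge_le_exp_mul_mgf _ ht hint
    _ ≤ exp (-t * (2 * v * s + 2 * L * s ^ 2)) * exp (t ^ 2 * v ^ 2 / (1 - 2 * t * L)) := by
        gcongr
    _ = exp (-s ^ 2) := by
        rw [← exp_add, htL]
        congr 1
        rw [ht_def]
        field_simp
        ring

lemma measureReal_abs_ge_le_two_mul_exp_neg_of_mgf_le (hv : 0 < v) (hL : 0 ≤ L) (hx : 0 ≤ x)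
    (hX : ∀ t, 2 * |t| * L < 1 →
      Integrable (fun ω => exp (t * X ω)) μ ∧ mgf X μ t ≤ exp (t ^ 2 * v ^ 2 / (1 - 2 * |t| * L))) :
    μ.real {ω | 2 * v * √x + 2 * L * x ≤ |X ω|} ≤ 2 * exp (-x) := by
  have hupper := measureReal_ge_le_exp_neg_of_mgf_le (μ := μ) (X := X) hv hL hx fun t ht => by
    simpa only [abs_of_nonneg ht] using hX t
  have hlower := measureReal_ge_le_exp_neg_of_mgf_le (μ := μ) (X := -X) hv hL hx fun t ht => by
    simpa only [mgf_neg, Pi.neg_apply, mul_neg, ← neg_mul, abs_neg, abs_of_nonneg ht, neg_sq]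
      using hX (-t)
  calc μ.real {ω | 2 * v * √x + 2 * L * x ≤ |X ω|}
      ≤ μ.real ({ω | 2 * v * √x + 2 * L * x ≤ X ω} ∪ {ω | 2 * v * √x + 2 * L * x ≤ (-X) ω}) :=
        measureReal_mono fun ω (hω : _ ≤ |X ω|) => by
          rcases le_abs'.mp hω with h | h
          · exact Or.inr (show _ ≤ -X ω by linarith)
          · exact Or.inl h
    _ ≤ 2 * exp (-x) := (measureReal_union_le _ _).trans (by linarith)

end SubGamma

-- For `c ≥ 1/2` both sides are junk zeros: the integrand is not integrable, and `√` of a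
-- nonpositive number is `0`.
lemma integral_exp_mul_sq_gaussianReal (c : ℝ) :
    ∫ y, exp (c * y ^ 2) ∂gaussianReal 0 1 = (√(1 - 2 * c))⁻¹ := by
  have hdens : ∀ y, gaussianPDFReal 0 1 y • exp (c * y ^ 2)
      = (√(2 * π))⁻¹ * exp (-(1 / 2 - c) * y ^ 2) := fun y => by
    rw [gaussianPDFReal_def, smul_eq_mul, mul_assoc, ← exp_add]
    simp only [NNReal.coe_one, mul_one]
    ring_nf
  simp_rw [integral_gaussianReal_eq_integral_smul one_ne_zero, hdens, integral_const_mul,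
    integral_gaussian, ← sqrt_inv]
  rw [← sqrt_mul (by positivity)]
  congr 1
  field_simp

lemma mgf_sq_sub_one_gaussianReal (t : ℝ) :
    mgf (fun y => y ^ 2 - 1) (gaussianReal 0 1) t = exp (-t) * (√(1 - 2 * t))⁻¹ := by
  have h : ∀ y : ℝ, exp (t * (y ^ 2 - 1)) = exp (-t) * exp (t * y ^ 2) := fun y => by
    rw [← exp_add]; ring_nf
  simp_rw [mgf, h, integral_const_mul, integral_exp_mul_sq_gaussianReal t]

lemma integrable_exp_mul_sq_sub_one_gaussianReal {t : ℝ} (ht : t < 1 / 2) :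
    Integrable (fun y => exp (t * (y ^ 2 - 1))) (gaussianReal 0 1) := by
  refine Integrable.of_integral_ne_zero ?_
  rw [← mgf, mgf_sq_sub_one_gaussianReal t]
  have : 0 < 1 - 2 * t := by linarith
  positivity

lemma mgf_sq_sub_one_gaussianReal_le {t L : ℝ} (hL : L < 1 / 2) (ht : |t| ≤ L) :
    mgf (fun y => y ^ 2 - 1) (gaussianReal 0 1) t ≤ exp (t ^ 2 / (1 - 2 * L)) := by
  have hpos : 0 < 1 - 2 * t := by linarith [le_abs_self t]
  rw [mgf_sq_sub_one_gaussianReal t, sqrt_eq_rpow,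
    rpow_def_of_pos hpos, ← exp_neg, ← exp_add, exp_le_exp]
  linarith [neg_sub_log_one_sub_two_mul_le hL ht]

section ChiSquare

variable {ι : Type*} [Fintype ι]

lemma integrable_exp_mul_and_mgf_le_sum_mul_sq_sub_one {d : ι → ℝ} {L t : ℝ}
    (hd : ∀ i, |d i| ≤ L) (ht : 2 * |t| * L < 1) :
    Integrable (fun x => exp (t * ∑ i, d i * (x i ^ 2 - 1)))
        (Measure.pi fun _ : ι => gaussianReal 0 1) ∧
      mgf (fun x => ∑ i, d i * (x i ^ 2 - 1)) (Measure.pi fun _ : ι => gaussianReal 0 1) t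
        ≤ exp (t ^ 2 * (∑ i, d i ^ 2) / (1 - 2 * |t| * L)) := by
  have hL : |t| * L < 1 / 2 := by linarith
  have htd : ∀ i, |t * d i| ≤ |t| * L := fun i => by
    rw [abs_mul]; exact mul_le_mul_of_nonneg_left (hd i) (abs_nonneg t)
  have hprod : ∀ x : ι → ℝ,
      exp (t * ∑ i, d i * (x i ^ 2 - 1)) = ∏ i, exp ((t * d i) * (x i ^ 2 - 1)) := fun x => by
    rw [Finset.mul_sum, exp_sum]; simp_rw [mul_assoc]
  simp_rw [mgf, hprod]
  refine ⟨Integrable.fintype_prod fun i =>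
    integrable_exp_mul_sq_sub_one_gaussianReal ((le_abs_self _).trans_lt ((htd i).trans_lt hL)), ?_⟩
  rw [integral_fintype_prod_eq_prod (𝕜 := ℝ) fun i y => exp (t * d i * (y ^ 2 - 1))]
  calc ∏ i, mgf (fun y => y ^ 2 - 1) (gaussianReal 0 1) (t * d i)
      ≤ ∏ i, exp ((t * d i) ^ 2 / (1 - 2 * (|t| * L))) :=
        Finset.prod_le_prod (fun i _ => mgf_nonneg) fun i _ =>
          mgf_sq_sub_one_gaussianReal_le hL (htd i)
    _ = exp (t ^ 2 * (∑ i, d i ^ 2) / (1 - 2 * |t| * L)) := by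
        rw [← exp_sum, Finset.mul_sum, Finset.sum_div]
        exact congrArg exp (Finset.sum_congr rfl fun i _ => by ring)

lemma measure_pi_gaussianReal_abs_sum_mul_sq_sub_one_ge_le {d : ι → ℝ} {v L z : ℝ}
    (hd : ∀ i, |d i| ≤ L) (hL : 0 ≤ L) (hv0 : 0 ≤ v) (hv : v ^ 2 = ∑ i, d i ^ 2) (hz : 0 < z) :
    Measure.pi (fun _ : ι => gaussianReal 0 1) {x | z ≤ |∑ i, d i * (x i ^ 2 - 1)|}
      ≤ ENNReal.ofReal (2 * exp (-(z ^ 2) / (v + √(v ^ 2 + 2 * L * z)) ^ 2)) := by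
  rcases hv0.eq_or_lt with rfl | hv0
  · have hsq := (Fintype.sum_eq_zero_iff_of_nonneg fun i => sq_nonneg (d i)).mp
      (by simpa using hv.symm)
    have hd0 : ∀ i, d i = 0 := fun i => (pow_eq_zero_iff two_ne_zero).mp (congrFun hsq i)
    have hempty : {x : ι → ℝ | z ≤ |∑ i, d i * (x i ^ 2 - 1)|} = ∅ := by
      simp [hd0, hz.not_ge]
    simp [hempty]
  have htail := measureReal_abs_ge_le_two_mul_exp_neg_of_mgf_le
    (μ := Measure.pi fun _ : ι => gaussianReal 0 1) (X := fun x => ∑ i, d i * (x i ^ 2 - 1))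
    hv0 hL (x := z ^ 2 / (v + √(v ^ 2 + 2 * L * z)) ^ 2) (by positivity) fun t ht => by
      simpa only [hv] using integrable_exp_mul_and_mgf_le_sum_mul_sq_sub_one hd ht
  rw [two_mul_sqrt_add_two_mul_eq hv0 hL hz.le] at htail
  rw [neg_div, ← ofReal_measureReal]
  exact ENNReal.ofReal_le_ofReal htail

end ChiSquare

namespace Matrix.IsHermitian

variable {n : Type*} [Fintype n] [DecidableEq n] {W : Matrix n n ℝ}

lemma dotProduct_mulVec_sum_smul_eigenvectorBasis (hW : W.IsHermitian) (x : n → ℝ) :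
    (W *ᵥ (∑ i, x i • hW.eigenvectorBasis i).ofLp) ⬝ᵥ (∑ i, x i • hW.eigenvectorBasis i).ofLp
      = ∑ i, hW.eigenvalues i * x i ^ 2 := by
  have horth : ∀ i j, (hW.eigenvectorBasis i).ofLp ⬝ᵥ (hW.eigenvectorBasis j).ofLp
      = if i = j then 1 else 0 := fun i j => by
    simpa [EuclideanSpace.inner_eq_star_dotProduct, dotProduct_comm]
      using orthonormal_iff_ite.mp hW.eigenvectorBasis.orthonormal i j
  simp only [WithLp.ofLp_sum, WithLp.ofLp_smul, mulVec_sum, mulVec_smul,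
    hW.mulVec_eigenvectorBasis, dotProduct_sum, dotProduct_smul, sum_dotProduct, smul_dotProduct,
    horth, smul_eq_mul, mul_ite, mul_one, mul_zero, Finset.sum_ite_eq', Finset.mem_univ, ↓reduceIte]
  exact Finset.sum_congr rfl fun i _ => by ring

lemma map_pi_gaussianReal_dotProduct_mulVec (hW : W.IsHermitian) :
    (Measure.pi fun _ : n => gaussianReal 0 1).map (fun γ => (W *ᵥ γ) ⬝ᵥ γ)
      = (Measure.pi fun _ : n => gaussianReal 0 1).map
          (fun x => ∑ i, hW.eigenvalues i * x i ^ 2) := by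
  set P := Measure.pi fun _ : n => gaussianReal 0 1
  let Q : EuclideanSpace ℝ n → ℝ := fun y => (W *ᵥ y.ofLp) ⬝ᵥ y.ofLp
  have hQ : Measurable Q := by fun_prop
  calc P.map (fun γ => (W *ᵥ γ) ⬝ᵥ γ) = (P.map (WithLp.toLp 2)).map Q := by
        rw [Measure.map_map hQ (by fun_prop)]; rfl
    _ = (P.map fun x => ∑ i, x i • hW.eigenvectorBasis i).map Q := by
        rw [map_pi_eq_stdGaussian, stdGaussian_eq_map_pi_orthonormalBasis hW.eigenvectorBasis]
    _ = P.map (fun x => ∑ i, hW.eigenvalues i * x i ^ 2) := by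
        rw [Measure.map_map hQ (by fun_prop)]
        exact congrArg P.map (funext hW.dotProduct_mulVec_sum_smul_eigenvectorBasis)

lemma trace_sq_eq_sum_eigenvalues_sq (hW : W.IsHermitian) :
    (W ^ 2).trace = ∑ i, hW.eigenvalues i ^ 2 := by
  conv_lhs => rw [hW.spectral_theorem, ← map_pow, Unitary.conjStarAlgAut_apply, trace_mul_cycle,
    Unitary.coe_star_mul_self, one_mul, diagonal_pow, trace_diagonal]
  simp

lemma abs_eigenvalues_le_norm_toEuclideanCLM (hW : W.IsHermitian) (i : n) :
    |hW.eigenvalues i| ≤ ‖Matrix.toEuclideanCLM (𝕜 := ℝ) W‖ := by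
  have h := (Matrix.toEuclideanCLM (𝕜 := ℝ) W).le_opNorm (hW.eigenvectorBasis i)
  have hb : Matrix.toEuclideanCLM (𝕜 := ℝ) W (hW.eigenvectorBasis i)
      = hW.eigenvalues i • hW.eigenvectorBasis i := by
    ext1
    simp [hW.mulVec_eigenvectorBasis]
  rwa [hb, norm_smul, hW.eigenvectorBasis.orthonormal.1 i, mul_one, mul_one, Real.norm_eq_abs] at h

lemma pi_gaussianReal_abs_dotProduct_mulVec_sub_trace_ge (hW : W.IsHermitian) (z : ℝ) :
    Measure.pi (fun _ : n => gaussianReal 0 1) {γ | z ≤ |(W *ᵥ γ) ⬝ᵥ γ - W.trace|}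
      = Measure.pi (fun _ : n => gaussianReal 0 1)
          {x | z ≤ |∑ i, hW.eigenvalues i * (x i ^ 2 - 1)|} := by
  have hS : MeasurableSet {q : ℝ | z ≤ |q - W.trace|} :=
    measurableSet_le measurable_const (by fun_prop)
  have htr : W.trace = ∑ i, hW.eigenvalues i := by simpa using hW.trace_eq_sum_eigenvalues
  rw [← Set.preimage_ofPred_eq (p := fun q => z ≤ |q - W.trace|),
    ← Measure.map_apply (by fun_prop) hS, hW.map_pi_gaussianReal_dotProduct_mulVec,
    Measure.map_apply (by fun_prop) hS]
  simp only [Set.preimage_ofPred_eq, htr, mul_sub, mul_one, Finset.sum_sub_distrib]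

end Matrix.IsHermitian

theorem stmt_14 {p : ℕ} (V B W : Matrix (Fin p) (Fin p) ℝ)
    (hV : V.PosSemidef) (hB : B.IsSymm) (hW : W = V * B * V)
    (pbar v lam : ℝ) (hpbar : pbar = W.trace) (hv : v = Real.sqrt ((W ^ 2).trace))
    (hlam : lam = ‖Matrix.toEuclideanCLM (𝕜 := ℝ) W‖)
    (z : ℝ) (hz : z > v) :
    stdGaussian p {γ | |B.mulVec (V.mulVec γ) ⬝ᵥ V.mulVec γ - pbar| ≥ z}
      ≤ ENNReal.ofReal (2 * Real.exp (-(z ^ 2) / (v + Real.sqrt (v ^ 2 + 2 * lam * z)) ^ 2)) ∧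
    2 * Real.exp (-(z ^ 2) / (v + Real.sqrt (v ^ 2 + 2 * lam * z)) ^ 2)
      ≤ 2 * Real.exp (-(z ^ 2) / (4 * v ^ 2 + 4 * lam * z)) := by
  have hv0 : 0 ≤ v := hv ▸ sqrt_nonneg _
  have hlam0 : 0 ≤ lam := hlam ▸ norm_nonneg _
  have hz0 : 0 < z := hv0.trans_lt hz
  refine ⟨?_, by gcongr 2 * exp ?_; exact neg_sq_div_sq_add_sqrt_le hv0 hlam0 hz0.le⟩
  have hVt : Vᵀ = V := by simpa using hV.isHermitian.eq
  have hWh : W.IsHermitian := by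
    simpa [hW, hVt] using isHermitian_conjTranspose_mul_mul V (isHermitian_iff_isSymm.mpr hB)
  have hquad : ∀ γ, B *ᵥ (V *ᵥ γ) ⬝ᵥ V *ᵥ γ = (W *ᵥ γ) ⬝ᵥ γ := fun γ => by
    rw [hW, ← mulVec_mulVec, ← mulVec_mulVec, dotProduct_comm (V *ᵥ _), dotProduct_mulVec,
      ← mulVec_transpose, hVt, dotProduct_comm]
  simp_rw [ge_iff_le, hquad, hpbar]
  rw [_root_.stdGaussian, hWh.pi_gaussianReal_abs_dotProduct_mulVec_sub_trace_ge]
  refine measure_pi_gaussianReal_abs_sum_mul_sq_sub_one_ge_le (fun i => ?_) hlam0 hv0 ?_ hz0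
  · exact hlam ▸ hWh.abs_eigenvalues_le_norm_toEuclideanCLM i
  · rw [hv, hWh.trace_sq_eq_sum_eigenvalues_sq, sq_sqrt (by positivity)]
end

section
/- Let ξ ~ N(0, V²) in R^p, B symmetric positive semidefinite, W = V B V trace class with p̄ = tr W, v² = tr W². Then for every x ≥ 0: P(⟨Bξ,ξ⟩ − p̄ < −2v√x) ≤ e^{−x}. -/
/-!
Diagonalize `W = V B V` in an orthonormal eigenbasis with eigenvalues `λᵢ ≥ 0`. The standard
Gaussian measure on `ℝᵖ` is invariant under orthogonal changes of coordinates, so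
`⟨B V γ, V γ⟩ = ⟨W γ, γ⟩` has the law of `∑ λᵢ yᵢ²` with `y` standard Gaussian, while
`p̄ = ∑ λᵢ` and `v² = ∑ λᵢ²`. For `t ≥ 0` the exponential moment is
`E exp (-t ∑ λᵢ yᵢ²) = ∏ (1 + 2 t λᵢ)^(-1/2) ≤ exp (t² v² - t p̄)`, using
`log (1 + u) ≥ u - u² / 2`, and Chernoff's bound at `t = √x / v` gives `e^{-x}`.
-/

open MeasureTheory ProbabilityTheory Matrix

section

open Real WithLp

lemma two_mul_sub_two_mul_sq_le_log_one_add_two_mul {a : ℝ} (ha : 0 ≤ a) :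
    2 * a - 2 * a ^ 2 ≤ log (1 + 2 * a) := by
  refine le_trans ?_ (le_log_one_add_of_nonneg (mul_nonneg zero_le_two ha))
  rw [le_div_iff₀ (by linarith)]
  nlinarith [pow_two_nonneg a, mul_nonneg ha (pow_two_nonneg a)]

lemma sqrt_inv_one_add_two_mul_le_exp {a : ℝ} (ha : 0 ≤ a) :
    √((1 + 2 * a)⁻¹) ≤ exp (a ^ 2 - a) := by
  have hpos : 0 < 1 + 2 * a := by linarith
  rw [Real.sqrt_inv, ← Real.exp_log hpos, ← exp_half, ← Real.exp_neg, exp_le_exp]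
  linarith [two_mul_sub_two_mul_sq_le_log_one_add_two_mul ha]

lemma mgf_sq_gaussianReal (s : ℝ) :
    mgf (fun y => y ^ 2) (gaussianReal 0 1) s = √((1 - 2 * s)⁻¹) := by
  rw [mgf, integral_gaussianReal_eq_integral_smul one_ne_zero]
  simp only [gaussianPDFReal, NNReal.coe_one, mul_one, sub_zero, smul_eq_mul]
  have h : ∀ y : ℝ, (√(2 * π))⁻¹ * exp (-y ^ 2 / 2) * exp (s * y ^ 2)
      = (√(2 * π))⁻¹ * exp (-(1 / 2 - s) * y ^ 2) := by
    intro y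
    rw [mul_assoc, ← Real.exp_add]
    ring_nf
  simp_rw [h]
  rw [integral_const_mul, integral_gaussian, ← Real.sqrt_inv, ← Real.sqrt_mul (by positivity),
    show 1 - 2 * s = 2 * (1 / 2 - s) by ring, mul_inv, mul_inv, div_eq_mul_inv]
  field_simp

variable {ι : Type*} [Fintype ι]

lemma mgf_sum_mul_sq_pi_gaussianReal (lam : ι → ℝ) (t : ℝ) :
    mgf (fun y => ∑ i, lam i * y i ^ 2) (Measure.pi fun _ : ι => gaussianReal 0 1) t
      = ∏ i, √((1 - 2 * (t * lam i))⁻¹) := by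
  have h : ∀ y : ι → ℝ, exp (t * ∑ i, lam i * y i ^ 2) = ∏ i, exp ((t * lam i) * y i ^ 2) := by
    intro y
    rw [Finset.mul_sum, Real.exp_sum]
    simp_rw [mul_assoc]
  simp_rw [mgf, h, integral_fintype_prod_eq_prod (fun i y => exp ((t * lam i) * y ^ 2)),
    ← mgf_sq_gaussianReal]
  rfl

lemma measureReal_sum_mul_sq_lt_le_exp {lam : ι → ℝ} (hlam : ∀ i, 0 ≤ lam i) (c : ℝ) {t : ℝ}
    (ht : 0 ≤ t) :
    (Measure.pi fun _ : ι => gaussianReal 0 1).real {y | ∑ i, lam i * y i ^ 2 < c}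
      ≤ exp (t * c + t ^ 2 * ∑ i, lam i ^ 2 - t * ∑ i, lam i) := by
  set μ := Measure.pi fun _ : ι => gaussianReal 0 1
  set Q : (ι → ℝ) → ℝ := fun y => ∑ i, lam i * y i ^ 2
  have hQ_nonneg : ∀ y, 0 ≤ Q y := fun y =>
    Finset.sum_nonneg fun i _ => mul_nonneg (hlam i) (sq_nonneg _)
  have h_int : Integrable (fun y => exp (-t * Q y)) μ :=
    Integrable.of_bound (by fun_prop) 1 (ae_of_all _ fun y => by
      rw [Real.norm_of_nonneg (exp_nonneg _), exp_le_one_iff]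
      nlinarith [hQ_nonneg y])
  have h_mgf : mgf Q μ (-t) ≤ exp (t ^ 2 * ∑ i, lam i ^ 2 - t * ∑ i, lam i) := by
    rw [mgf_sum_mul_sq_pi_gaussianReal, Finset.mul_sum, Finset.mul_sum, ← Finset.sum_sub_distrib,
      Real.exp_sum]
    gcongr with i
    rw [neg_mul, mul_neg, sub_neg_eq_add, ← mul_pow]
    exact sqrt_inv_one_add_two_mul_le_exp (mul_nonneg ht (hlam i))
  calc μ.real {y | Q y < c} ≤ μ.real {y | Q y ≤ c} :=
        measureReal_mono fun y (hy : Q y < c) => hy.le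
    _ ≤ exp (- -t * c) * mgf Q μ (-t) := measure_le_le_exp_mul_mgf c (neg_nonpos.2 ht) h_int
    _ ≤ exp (t * c) * exp (t ^ 2 * ∑ i, lam i ^ 2 - t * ∑ i, lam i) := by
        rw [neg_neg]; gcongr
    _ = _ := by rw [← Real.exp_add]; ring_nf

lemma measure_sum_mul_sq_sub_sum_lt_le_exp {lam : ι → ℝ} (hlam : ∀ i, 0 ≤ lam i) {x : ℝ}
    (hx : 0 ≤ x) :
    Measure.pi (fun _ : ι => gaussianReal 0 1)
        {y | ∑ i, lam i * y i ^ 2 - ∑ i, lam i < -(2 * √(∑ i, lam i ^ 2) * √x)}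
      ≤ ENNReal.ofReal (exp (-x)) := by
  set v := √(∑ i, lam i ^ 2) with hv_def
  rcases (Real.sqrt_nonneg _ : 0 ≤ v).eq_or_lt with hv | hv
  · have hlam0 : ∀ i, lam i = 0 := by
      have hsum : ∑ i, lam i ^ 2 = 0 :=
        (Real.sqrt_eq_zero (Finset.sum_nonneg fun i _ => sq_nonneg _)).1 hv.symm
      intro i
      simpa using (Finset.sum_eq_zero_iff_of_nonneg fun i _ => sq_nonneg (lam i)).1 hsum i
        (Finset.mem_univ i)
    have hv0 : v = 0 := by simp [hv_def, hlam0]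
    simp [hlam0, hv0]
  · have hv2 : ∑ i, lam i ^ 2 = v ^ 2 :=
      (Real.sq_sqrt (Finset.sum_nonneg fun i _ => sq_nonneg _)).symm
    obtain ⟨t, ht, htv⟩ : ∃ t, 0 ≤ t ∧ t * v = √x :=
      ⟨√x / v, by positivity, div_mul_cancel₀ _ hv.ne'⟩
    simp_rw [sub_lt_iff_lt_add']
    rw [← ofReal_measureReal]
    gcongr
    refine (measureReal_sum_mul_sq_lt_le_exp hlam _ ht).trans_eq ?_
    congr 1
    rw [hv2]
    linear_combination (t * v - √x) * htv - Real.sq_sqrt hx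

lemma measurePreserving_pi_gaussianReal_orthonormalBasis
    (b : OrthonormalBasis ι ℝ (EuclideanSpace ℝ ι)) :
    MeasurePreserving (fun y => ofLp (∑ i, y i • b i))
      (Measure.pi fun _ => gaussianReal 0 1) (Measure.pi fun _ => gaussianReal 0 1) where
  measurable := by fun_prop
  map_eq := by
    set μ := Measure.pi fun _ : ι => gaussianReal 0 1
    calc μ.map (fun y => ofLp (∑ i, y i • b i))
        = (μ.map fun y => ∑ i, y i • b i).map ofLp :=
          (Measure.map_map (by fun_prop) (by fun_prop)).symm
      _ = (μ.map (toLp 2)).map ofLp := by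
        rw [← stdGaussian_eq_map_pi_orthonormalBasis, map_pi_eq_stdGaussian]
      _ = μ := by
        rw [Measure.map_map (by fun_prop) (by fun_prop)]
        exact Measure.map_id

lemma Matrix.IsHermitian.trace_pow_eq_sum_eigenvalues_pow {𝕜 n : Type*} [RCLike 𝕜] [Fintype n]
    [DecidableEq n] {A : Matrix n n 𝕜} (hA : A.IsHermitian) (k : ℕ) :
    (A ^ k).trace = ∑ i, (hA.eigenvalues i : 𝕜) ^ k := by
  conv_lhs => rw [hA.spectral_theorem, ← map_pow, Unitary.conjStarAlgAut_apply, trace_mul_cycle,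
    Unitary.coe_star_mul_self, one_mul, diagonal_pow, trace_diagonal]
  rfl

lemma Matrix.IsHermitian.dotProduct_mulVec_sum_eigenvectorBasis [DecidableEq ι]
    {A : Matrix ι ι ℝ} (hA : A.IsHermitian) (y : ι → ℝ) :
    ofLp (∑ i, y i • hA.eigenvectorBasis i) ⬝ᵥ A *ᵥ ofLp (∑ i, y i • hA.eigenvectorBasis i)
      = ∑ i, hA.eigenvalues i * y i ^ 2 := by
  set b := hA.eigenvectorBasis
  have hAz : A *ᵥ ofLp (∑ i, y i • b i) = ofLp (∑ i, (hA.eigenvalues i * y i) • b i) := by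
    simp only [WithLp.ofLp_sum, WithLp.ofLp_smul, mulVec_sum, mulVec_smul,
      hA.mulVec_eigenvectorBasis, b, smul_smul, mul_comm]
  rw [hAz, dotProduct_comm, ← star_trivial (ofLp (∑ i, y i • b i)),
    ← EuclideanSpace.inner_eq_star_dotProduct, b.orthonormal.inner_sum]
  simp only [conj_trivial, sq, mul_assoc, mul_comm (hA.eigenvalues _)]

end

lemma mulVec_mulVec_dotProduct_mulVec {m n α : Type*} [Fintype m] [Fintype n] [CommSemiring α]
    (B : Matrix m m α) (V : Matrix m n α) (γ : n → α) :
    B *ᵥ (V *ᵥ γ) ⬝ᵥ V *ᵥ γ = γ ⬝ᵥ (Vᵀ * B * V) *ᵥ γ := by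
  rw [← mulVec_mulVec, ← mulVec_mulVec, dotProduct_mulVec γ, vecMul_transpose, dotProduct_comm]

theorem stmt_16 {p : ℕ} (V B W : Matrix (Fin p) (Fin p) ℝ)
    (hV : V.PosSemidef) (hB : B.PosSemidef) (hW : W = V * B * V)
    (pbar v : ℝ) (hpbar : pbar = W.trace) (hv : v = Real.sqrt ((W ^ 2).trace))
    (x : ℝ) (hx : 0 ≤ x) :
    stdGaussian p {γ | B.mulVec (V.mulVec γ) ⬝ᵥ V.mulVec γ - pbar < -(2 * v * Real.sqrt x)}
      ≤ ENNReal.ofReal (Real.exp (-x)) := by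
  have hVT : Vᵀ = V := hV.1
  have hWpsd : W.PosSemidef := by
    have h := hB.conjTranspose_mul_mul_same V
    rwa [hV.1, ← hW] at h
  set hWh := hWpsd.1
  have hpbar' : pbar = ∑ i, hWh.eigenvalues i := by
    simpa [hWh.trace_eq_sum_eigenvalues] using hpbar
  have hv' : v = √(∑ i, hWh.eigenvalues i ^ 2) := by
    simpa [hWh.trace_pow_eq_sum_eigenvalues_pow] using hv
  have hQ : ∀ γ, B *ᵥ (V *ᵥ γ) ⬝ᵥ V *ᵥ γ = γ ⬝ᵥ W *ᵥ γ := fun γ => by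
    rw [mulVec_mulVec_dotProduct_mulVec, hVT, hW]
  simp_rw [hQ, hpbar', hv']
  rw [show _root_.stdGaussian p = Measure.pi fun _ => gaussianReal 0 1 from rfl,
    ← (measurePreserving_pi_gaussianReal_orthonormalBasis hWh.eigenvectorBasis).measure_preimage
      (measurableSet_lt (by fun_prop) measurable_const).nullMeasurableSet]
  simpa only [Set.preimage_ofPred_eq, hWh.dotProduct_mulVec_sum_eigenvectorBasis] using
    measure_sum_mul_sq_sub_sum_lt_le_exp hWpsd.eigenvalues_nonneg hx
end
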